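/- A sheaf M of modules on a finite poset P is flabby (every restriction M(P) → M(U) to an open set is surjective) if and only if for every y ∈ P the restriction map ∂_y : M(y) → M(∂y) from the stalk at y to the sections on the punctured neighborhood ∂y = {z | z < y} is surjective. -/

import Mathlib

/-! Restricting a global extension of a section over `∂y` to `U_y` lifts it to `M(y)`.
Conversely, for an open `U ≠ P` pick `y ∉ U` minimal, so that `∂y ⊆ U` and `U ∩ U_y = ∂y`: the
restriction to `∂y` of a section over `U` lifts to `M(y)`, and the two glue to a section over the
strictly larger open `U ∪ U_y`. Descending induction over the finitely many open sets then extends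
every section to `P`. -/

set_option linter.unusedSectionVars false

open CategoryTheory TopologicalSpace Opposite

variable (P : Type) [PartialOrder P] [Fintype P]

/-- The down-set (Alexandrov) topology on a poset: a set is open iff it is a lower set. -/
instance downTopology : TopologicalSpace P where
  IsOpen U := IsLowerSet U
  isOpen_univ := isLowerSet_univ
  isOpen_inter := fun _ _ hs ht => hs.inter ht
  isOpen_sUnion := fun _ h => isLowerSet_sUnion h

variable {P}

/-- The minimal open neighborhood `U_y = {z | z ≤ y}` of `y`. -/
def Ux (y : P) : Opens P :=
  ⟨{z : P | z ≤ y}, fun _ _ hba ha => le_trans hba ha⟩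

/-- The punctured neighborhood `∂y = {z | z < y}`, which is open. -/
def punct (y : P) : Opens P :=
  ⟨{z : P | z < y}, fun _ _ hba ha => lt_of_le_of_lt hba ha⟩

theorem punct_le_Ux (y : P) : punct y ≤ Ux y := fun _ hz => le_of_lt hz

open Limits TopCat.Presheaf

theorem punct_le_of_minimal {U : Opens P} {y : P} (hy : Minimal (· ∉ U) y) : punct y ≤ U :=
  fun _ hz => by_contra (hy.not_prop_of_lt hz)

theorem inf_Ux_le_punct {U : Opens P} {y : P} (hy : y ∉ U) : U ⊓ Ux y ≤ punct y :=
  fun _ ⟨hzU, hzy⟩ => lt_of_le_of_ne hzy fun h => hy (h ▸ hzU)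

theorem lt_sup_Ux {U : Opens P} {y : P} (hy : y ∉ U) : U < U ⊔ Ux y :=
  left_lt_sup.mpr fun h => hy (h (le_refl y))

section

variable {C : Type*} [Category* C] {FC : C → C → Type*} {CC : C → Type*}
  [∀ X Y, FunLike (FC X Y) (CC X) (CC Y)] [ConcreteCategory C FC]

theorem surjective_map_punct_of_surjective_map_top (M : (TopCat.of P).Sheaf C)
    (hM : ∀ U : Opens P, Function.Surjective (M.obj.map (op (homOfLE (le_top : U ≤ ⊤)))))
    (y : P) : Function.Surjective (M.obj.map (op (homOfLE (punct_le_Ux y)))) := fun s => by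
  obtain ⟨g, hg⟩ := hM (punct y) s
  exact ⟨M.obj.map (op (homOfLE (le_top : Ux y ≤ ⊤))) g,
    (restrict_restrict (punct_le_Ux y) le_top g).trans hg⟩

variable [PreservesLimitsOfShape WalkingCospan (CategoryTheory.forget C)]

theorem TopCat.Sheaf.exists_map_sup_eq {X : TopCat} (F : X.Sheaf C) {U V : Opens X}
    (s : ToType (F.obj.obj (op U))) (t : ToType (F.obj.obj (op V)))
    (h : F.obj.map (homOfLE inf_le_left : U ⊓ V ⟶ U).op s =
      F.obj.map (homOfLE inf_le_right).op t) :
    ∃ w : ToType (F.obj.obj (op (U ⊔ V))),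
      F.obj.map (homOfLE le_sup_left).op w = s ∧ F.obj.map (homOfLE le_sup_right).op w = t := by
  have hc :=
    isLimitPullbackConeMapOfIsLimit (CategoryTheory.forget C) _ (F.isLimitPullbackCone U V)
  exact ⟨(PullbackCone.IsLimit.equivPullbackObj hc).symm ⟨(s, t), h⟩,
    PullbackCone.IsLimit.equivPullbackObj_symm_apply_fst hc _,
    PullbackCone.IsLimit.equivPullbackObj_symm_apply_snd hc _⟩

theorem surjective_map_sup_Ux (M : (TopCat.of P).Sheaf C) {U : Opens P} {y : P} (hyU : y ∉ U)
    (hU : punct y ≤ U) (hy : Function.Surjective (M.obj.map (op (homOfLE (punct_le_Ux y))))) :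
    Function.Surjective (M.obj.map (op (homOfLE (le_sup_left : U ≤ U ⊔ Ux y)))) := by
  intro s
  obtain ⟨t, ht⟩ := hy (M.obj.map (op (homOfLE hU)) s)
  have hcompat : M.obj.map (homOfLE inf_le_left : U ⊓ Ux y ⟶ U).op s =
      M.obj.map (homOfLE inf_le_right).op t :=
    calc _ = M.obj.map (op (homOfLE (inf_Ux_le_punct hyU))) (M.obj.map (op (homOfLE hU)) s) :=
          (restrict_restrict _ hU s).symm
      _ = M.obj.map (op (homOfLE (inf_Ux_le_punct hyU)))
            (M.obj.map (op (homOfLE (punct_le_Ux y))) t) := by rw [ht]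
      _ = _ := restrict_restrict _ (punct_le_Ux y) t
  obtain ⟨w, hw, -⟩ := TopCat.Sheaf.exists_map_sup_eq M s t hcompat
  exact ⟨w, hw⟩

theorem surjective_map_top_of_surjective_punct (M : (TopCat.of P).Sheaf C)
    (hM : ∀ y : P, Function.Surjective (M.obj.map (op (homOfLE (punct_le_Ux y)))))
    (U : Opens P) : Function.Surjective (M.obj.map (op (homOfLE (le_top : U ≤ ⊤)))) := by
  induction U using WellFoundedGT.induction with
  | ind U ih =>
    by_cases hU : ∀ y, y ∈ U
    · obtain rfl : U = ⊤ := eq_top_iff.mpr fun y _ => hU y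
      exact fun s => ⟨s, restrict_self s⟩
    obtain ⟨y, hy⟩ := exists_minimal_of_wellFoundedLT (· ∉ U) (not_forall.mp hU)
    intro s
    obtain ⟨w, rfl⟩ := surjective_map_sup_Ux M hy.prop (punct_le_of_minimal hy) (hM y) s
    obtain ⟨g, rfl⟩ := ih _ (lt_sup_Ux hy.prop) w
    exact ⟨g, (restrict_restrict le_sup_left le_top g).symm⟩

end

theorem stmt3 (R : Type) [CommRing R]
    (M : TopCat.Sheaf (ModuleCat R) (TopCat.of P)) :
    (∀ U : Opens P, Function.Surjective
        (M.val.map (op (homOfLE (le_top : U ≤ ⊤))))) ↔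
      ∀ y : P, Function.Surjective
        (M.val.map (op (homOfLE (punct_le_Ux y)))) :=
  ⟨surjective_map_punct_of_surjective_map_top M, surjective_map_top_of_surjective_punct M⟩
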